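/- arXiv:1810.03107 — 2 statements merged into one kernel-verified Lean document; each statement's English description precedes it below -/
import Mathlib

section
/- Define I_{i,j}(h) = ∫_{Γ_h^+} x^{i-4} y^j dx, where Γ_h^+ is the upper half of the level curve H(x,y) = h, h ∈ (-1,0). Then for all integers i ≥ -1 and j ≥ 2: (2i + 3j - 6)·I_{i,j}(h) = 4j·(I_{i+2,j-2}(h) - I_{i+1,j-2}(h)). -/
/-!
Let `F(x) = x^(i-3) y^j` with `y = yy h x`. Since `y² = 2hx³ + 4x² - 2x`, differentiating gives
`F' = (i - 3 + 3j/2) x^(i-4) y^j - 2j x^(i-2) y^(j-2) + 2j x^(i-3) y^(j-2)`,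
and `F` vanishes at the endpoints `xl h`, `xr h`, the positive roots of the cubic.
Hence `∫ F' = 0` over the branch, and twice this relation is the recurrence.
-/

/-- The y-coordinate of the upper branch of the level curve H = h. -/
noncomputable def yy (h x : ℝ) : ℝ := Real.sqrt (2*h*x^3 + 4*x^2 - 2*x)

/-- Left endpoint of the upper branch of the level curve H = h. -/
noncomputable def xl (h : ℝ) : ℝ := (1 - Real.sqrt (1 + h)) / (-h)

/-- Right endpoint of the upper branch of the level curve H = h. -/
noncomputable def xr (h : ℝ) : ℝ := (1 + Real.sqrt (1 + h)) / (-h)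

/-- I_{i,j}(h) = ∫ over Γ_h⁺ of x^{i-4} y^j dx, over the upper branch. -/
noncomputable def Iint (i : ℤ) (j : ℕ) (h : ℝ) : ℝ :=
  ∫ x in xl h..xr h, x ^ (i - 4) * yy h x ^ j

open Set MeasureTheory

lemma HasDerivAt.sqrt_pow_add_two {f : ℝ → ℝ} {f' x : ℝ} (hf : HasDerivAt f f' x)
    (hx : 0 < f x) (n : ℕ) :
    HasDerivAt (fun y => √(f y) ^ (n + 2)) ((n + 2) / 2 * √(f x) ^ n * f') x := by
  have hs : √(f x) ≠ 0 := (Real.sqrt_pos.mpr hx).ne'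
  refine ((hf.sqrt hx.ne').pow (n + 2)).congr_deriv ?_
  rw [show n + 2 - 1 = n + 1 by omega, pow_succ]
  push_cast
  field_simp

lemma continuous_yy (h : ℝ) : Continuous (yy h) := by
  unfold yy
  fun_prop

lemma continuousOn_zpow_mul_yy_pow (h : ℝ) {a b : ℝ} (ha : 0 < a) (m : ℤ) (k : ℕ) :
    ContinuousOn (fun x => x ^ m * yy h x ^ k) (Icc a b) := by
  refine ContinuousOn.mul (fun x hx => ?_) ((continuous_yy h).pow k).continuousOn
  exact (continuousAt_zpow₀ x m (Or.inl (ha.trans_le hx.1).ne')).continuousWithinAt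

lemma xl_pos {h : ℝ} (h0 : h < 0) : 0 < xl h := by
  have hs : √(1 + h) < 1 := (Real.sqrt_lt' one_pos).mpr (by linarith)
  exact div_pos (by linarith) (by linarith)

section LevelCurve

variable {h : ℝ} (h1 : -1 < h) (h0 : h < 0)
include h1 h0

lemma cubic_eq_mul_sub_mul_sub (x : ℝ) :
    2*h*x^3 + 4*x^2 - 2*x = (-2*h) * x * (x - xl h) * (xr h - x) := by
  have hne : h ≠ 0 := h0.ne
  have hs : √(1 + h) ^ 2 = 1 + h := Real.sq_sqrt (by linarith)
  have hsum : h * (xl h + xr h) = -2 := by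
    unfold xl xr; field_simp; ring
  have hprod : h * (xl h * xr h) = -1 := by
    unfold xl xr; field_simp; linear_combination (-1) * hs
  linear_combination (2 * x ^ 2) * hsum - (2 * x) * hprod

lemma xl_lt_xr : xl h < xr h := by
  have hs : 0 < √(1 + h) := Real.sqrt_pos.mpr (by linarith)
  exact div_lt_div_of_pos_right (by linarith) (by linarith)

lemma cubic_pos_of_mem_Ioo {x : ℝ} (hx : x ∈ Ioo (xl h) (xr h)) :
    0 < 2*h*x^3 + 4*x^2 - 2*x := by
  have hx0 : 0 < x := (xl_pos h0).trans hx.1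
  rw [cubic_eq_mul_sub_mul_sub h1 h0]
  have : 0 < x - xl h := sub_pos.mpr hx.1
  have : 0 < xr h - x := sub_pos.mpr hx.2
  have : 0 < -2 * h := by linarith
  positivity

lemma yy_xl : yy h (xl h) = 0 := by
  rw [yy, cubic_eq_mul_sub_mul_sub h1 h0, sub_self, mul_zero, zero_mul, Real.sqrt_zero]

lemma yy_xr : yy h (xr h) = 0 := by
  rw [yy, cubic_eq_mul_sub_mul_sub h1 h0, sub_self, mul_zero, Real.sqrt_zero]

lemma intervalIntegrable_zpow_mul_yy_pow (m : ℤ) (k : ℕ) :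
    IntervalIntegrable (fun x => x ^ m * yy h x ^ k) volume (xl h) (xr h) :=
  (continuousOn_zpow_mul_yy_pow h (xl_pos h0) m k).intervalIntegrable_of_Icc (xl_lt_xr h1 h0).le

lemma hasDerivAt_zpow_mul_yy_pow (i : ℤ) (n : ℕ) {x : ℝ} (hx : x ∈ Ioo (xl h) (xr h)) :
    HasDerivAt (fun x => x ^ (i - 3) * yy h x ^ (n + 2))
      ((i - 3 + 3 * (n + 2) / 2) * (x ^ (i - 4) * yy h x ^ (n + 2))
        - 2 * (n + 2) * (x ^ (i - 2) * yy h x ^ n)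
        + 2 * (n + 2) * (x ^ (i - 3) * yy h x ^ n)) x := by
  have hx0 : x ≠ 0 := ((xl_pos h0).trans hx.1).ne'
  have hP := cubic_pos_of_mem_Ioo h1 h0 hx
  have hcubic : HasDerivAt (fun x => 2*h*x^3 + 4*x^2 - 2*x) (6*h*x^2 + 8*x - 2) x := by
    refine ((((hasDerivAt_pow 3 x).const_mul (2*h)).add
      ((hasDerivAt_pow 2 x).const_mul 4)).sub ((hasDerivAt_id x).const_mul 2)).congr_deriv ?_
    push_cast
    ring
  have hzpow : HasDerivAt (fun x : ℝ => x ^ (i - 3)) ((i - 3) * x ^ (i - 4)) x := by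
    refine (hasDerivAt_zpow (i - 3) x (Or.inl hx0)).congr_deriv ?_
    rw [show i - 3 - 1 = i - 4 by ring]
    push_cast
    rfl
  refine (hzpow.mul (hcubic.sqrt_pow_add_two hP n)).congr_deriv ?_
  have hy2 : yy h x ^ 2 = 2*h*x^3 + 4*x^2 - 2*x := Real.sq_sqrt hP.le
  have e3 : x ^ (i - 3) = x ^ (i - 4) * x := by
    rw [← zpow_add_one₀ hx0]; ring_nf
  have e2 : x ^ (i - 2) = x ^ (i - 4) * x ^ 2 := by
    rw [← zpow_natCast, ← zpow_add₀ hx0]; ring_nf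
  rw [← yy, e3, e2, pow_add _ n 2, hy2]
  ring

lemma Iint_relation (i : ℤ) (n : ℕ) :
    (i - 3 + 3 * (n + 2) / 2) * Iint i (n + 2) h
      - 2 * (n + 2) * Iint (i + 2) n h + 2 * (n + 2) * Iint (i + 1) n h = 0 := by
  have hint := intervalIntegrable_zpow_mul_yy_pow h1 h0
  have hA := (hint (i - 4) (n + 2)).const_mul ((i : ℝ) - 3 + 3 * (n + 2) / 2)
  have hB := (hint (i - 2) n).const_mul (2 * ((n : ℝ) + 2))
  have hC := (hint (i - 3) n).const_mul (2 * ((n : ℝ) + 2))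
  have hFTC := intervalIntegral.integral_eq_sub_of_hasDerivAt_of_le (xl_lt_xr h1 h0).le
    (continuousOn_zpow_mul_yy_pow h (xl_pos h0) (i - 3) (n + 2))
    (fun x hx => hasDerivAt_zpow_mul_yy_pow h1 h0 i n hx) ((hA.sub hB).add hC)
  rw [yy_xl h1 h0, yy_xr h1 h0, zero_pow (by omega), mul_zero, mul_zero, sub_zero,
    intervalIntegral.integral_add (hA.sub hB) hC, intervalIntegral.integral_sub hA hB,
    intervalIntegral.integral_const_mul, intervalIntegral.integral_const_mul,
    intervalIntegral.integral_const_mul] at hFTC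
  simpa only [Iint, show i + 2 - 4 = i - 2 by ring, show i + 1 - 4 = i - 3 by ring] using hFTC

end LevelCurve

theorem Iint_recurrence_one_general (i : ℤ) (j : ℕ) (hj : 2 ≤ j)
    (h : ℝ) (hh : h ∈ Set.Ioo (-1 : ℝ) 0) :
    ((2*i + 3*(j : ℤ) - 6 : ℤ) : ℝ) * Iint i j h
      = 4 * (j : ℝ) * (Iint (i+2) (j-2) h - Iint (i+1) (j-2) h) := by
  obtain ⟨n, rfl⟩ := Nat.exists_eq_add_of_le' hj
  have hrel := Iint_relation hh.1 hh.2 i n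
  rw [Nat.add_sub_cancel]
  push_cast
  linear_combination 2 * hrel

/-- For all integers i ≥ -1 and j ≥ 2:
(2i + 3j - 6)·I_{i,j}(h) = 4j·(I_{i+2,j-2}(h) - I_{i+1,j-2}(h)). -/
theorem Iint_recurrence_one (i : ℤ) (hi : -1 ≤ i) (j : ℕ) (hj : 2 ≤ j)
    (h : ℝ) (hh : h ∈ Set.Ioo (-1 : ℝ) 0) :
    ((2*i + 3*(j : ℤ) - 6 : ℤ) : ℝ) * Iint i j h
      = 4 * (j : ℝ) * (Iint (i+2) (j-2) h - Iint (i+1) (j-2) h) :=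
  Iint_recurrence_one_general i j hj h hh
end

section
/- Let a₁, a₂ : I → ℝ be analytic on an open interval I, and suppose the linear ODE x'' + a₁(t)x' + a₂(t)x = 0 admits a solution x₀ which is nowhere zero on I. If R : I → ℝ is analytic with at most l zeros (counted with multiplicity), then every solution x of x'' + a₁(t)x' + a₂(t)x = R(t) has at most l + 2 zeros on I, counted with multiplicity. -/
/-!
Write `x = u x₀`. The Wronskian `W = x₀ x' - x₀' x = x₀² u'` satisfies Abel's equation
`W' + a₁ W = x₀ R`, so with the integrating factor `E = exp ∫ a₁` we get `(E W)' = E x₀ R`.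
Multiplying by a smooth nowhere-vanishing function does not decrease the multiplicity of a zero,
and by Rolle's theorem a function has at most one zero more than its derivative. Hence `(E W)'`
has at most `l` zeros, `E W`, `W` and `u'` at most `l + 1`, and `u` and `x = u x₀` at most `l + 2`.
-/

/-- `f` has at most `l` zeros on `s`, counted with multiplicity: for any finite set of
points of `s` at which `f` vanishes together with its first `m x - 1` derivatives,
the total multiplicity is at most `l`. -/
def ZerosWithMultAtMost (f : ℝ → ℝ) (s : Set ℝ) (l : ℕ) : Prop :=
  ∀ (t : Finset ℝ) (m : ℝ → ℕ), (↑t : Set ℝ) ⊆ s →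
    (∀ x ∈ t, 1 ≤ m x ∧ ∀ k < m x, iteratedDeriv k f x = 0) →
    t.sum m ≤ l

open Set
open scoped ContDiff

theorem ContDiffOn.differentiableAt_of_isOpen {𝕜 E F : Type*} [NontriviallyNormedField 𝕜]
    [NormedAddCommGroup E] [NormedSpace 𝕜 E] [NormedAddCommGroup F] [NormedSpace 𝕜 F]
    {f : E → F} {s : Set E} {n : WithTop ℕ∞} {x : E} (hf : ContDiffOn 𝕜 n f s) (hs : IsOpen s)
    (hn : n ≠ 0) (hx : x ∈ s) : DifferentiableAt 𝕜 f x :=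
  (hf.differentiableOn hn x hx).differentiableAt (hs.mem_nhds hx)

def VanishesToOrder (f : ℝ → ℝ) (n : ℕ) (x : ℝ) : Prop :=
  ∀ k < n, iteratedDeriv k f x = 0

namespace VanishesToOrder

variable {f g : ℝ → ℝ} {n : ℕ} {x : ℝ}

theorem apply_eq_zero (h : VanishesToOrder f n x) (hn : 1 ≤ n) : f x = 0 := by
  simpa using h 0 hn

theorem deriv (h : VanishesToOrder f n x) : VanishesToOrder (deriv f) (n - 1) x := fun k hk => by
  rw [← iteratedDeriv_succ']
  exact h (k + 1) (by omega)

theorem mul (h : VanishesToOrder f n x) (hf : ContDiffAt ℝ n f x) (hg : ContDiffAt ℝ n g x) :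
    VanishesToOrder (f * g) n x := fun k hk => by
  have hkn : (k : WithTop ℕ∞) ≤ n := by exact_mod_cast hk.le
  rw [iteratedDeriv_mul (hf.of_le hkn) (hg.of_le hkn)]
  refine Finset.sum_eq_zero fun i hi => ?_
  rw [h i (by grind)]
  simp

theorem forall_mem_insert_update {t : Finset ℝ} {m : ℝ → ℕ} {a : ℝ} {n : ℕ}
    (hn : VanishesToOrder g n a) (ha : a ∉ t) (hm : ∀ x ∈ t, VanishesToOrder g (m x) x) :
    ∀ x ∈ insert a t, VanishesToOrder g (Function.update m a n x) x := by
  simp only [Finset.forall_mem_insert, Function.update_self]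
  exact ⟨hn, fun x hx => by rw [Function.update_of_ne (ne_of_mem_of_not_mem hx ha)]; exact hm x hx⟩

end VanishesToOrder

theorem Finset.sum_insert_update {ι M : Type*} [DecidableEq ι] [AddCommMonoid M] {s : Finset ι}
    {i : ι} (hi : i ∉ s) (f : ι → M) (b : M) :
    (insert i s).sum (Function.update f i b) = b + s.sum f := by
  rw [Finset.sum_insert hi, Function.update_self, Finset.sum_update_of_notMem hi]

namespace ZerosWithMultAtMost

variable {s : Set ℝ} {f g h : ℝ → ℝ} {l : ℕ}

theorem sum_le (hf : ZerosWithMultAtMost f s l) (t : Finset ℝ) (m : ℝ → ℕ) (hts : ↑t ⊆ s)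
    (hm : ∀ x ∈ t, VanishesToOrder f (m x) x) : t.sum m ≤ l := by
  classical
  rw [← Finset.sum_filter_ne_zero]
  exact hf _ m (fun x hx => hts (Finset.mem_of_mem_filter x hx))
    fun x hx => ⟨Nat.one_le_iff_ne_zero.2 (Finset.mem_filter.1 hx).2,
      hm x (Finset.mem_of_mem_filter x hx)⟩

theorem of_eqOn_mul (hs : IsOpen s) (hf : ContDiffOn ℝ ∞ f s) (hh : ContDiffOn ℝ ∞ h s)
    (hg : ZerosWithMultAtMost g s l) (hgfh : EqOn g (f * h) s) :
    ZerosWithMultAtMost f s l := by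
  intro t m hts hm
  refine hg t m hts fun x hx => ⟨(hm x hx).1, ?_⟩
  have hxs := hs.mem_nhds (hts hx)
  intro k hk
  rw [hgfh.iteratedDeriv_of_isOpen hs k (hts hx)]
  exact VanishesToOrder.mul (hm x hx).2 ((hf.contDiffAt hxs).of_le (by exact_mod_cast le_top))
    ((hh.contDiffAt hxs).of_le (by exact_mod_cast le_top)) k hk

theorem exists_mem_Ioo_vanishesToOrder_deriv [s.OrdConnected] (hf : ContinuousOn f s) {a b : ℝ}
    (ha : a ∈ s) (hb : b ∈ s) (hab : a < b) (hfa : f a = 0) (hfb : f b = 0) :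
    ∃ c ∈ Ioo a b, c ∈ s ∧ VanishesToOrder (deriv f) 1 c := by
  obtain ⟨c, hc, hc0⟩ := exists_deriv_eq_zero hab (hf.mono (s.Icc_subset ha hb)) (hfa.trans hfb.symm)
  exact ⟨c, hc, s.Icc_subset ha hb (Ioo_subset_Icc_self hc), fun k hk => by
    simpa [Nat.lt_one_iff.1 hk] using hc0⟩

theorem exists_vanishesToOrder_deriv [s.OrdConnected] (hf : ContinuousOn f s)
    (t : Finset ℝ) (m : ℝ → ℕ) (hts : ↑t ⊆ s) (hm : ∀ x ∈ t, 1 ≤ m x ∧ VanishesToOrder f (m x) x) :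
    ∃ (t' : Finset ℝ) (m' : ℝ → ℕ), ↑t' ⊆ s ∧ (∀ x ∈ t', VanishesToOrder (deriv f) (m' x) x) ∧
      (∀ y ∈ t', ∃ z ∈ t, y ≤ z) ∧ t.sum m ≤ t'.sum m' + 1 := by
  -- The third conjunct places the new zeros below the largest old one, which is what lets the
  -- induction add a new largest zero.
  classical
  induction t using Finset.induction_on_max with
  | empty => exact ⟨∅, 0, by simp, by simp, by simp, by simp⟩
  | insert a t hlt ih =>
    have has : a ∈ s := hts (Finset.mem_insert_self a t)
    obtain ⟨ha1, hfa⟩ := hm a (Finset.mem_insert_self a t)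
    obtain ⟨t₁, m₁, ht₁s, hm₁, ht₁a, hsum₁⟩ : ∃ (t₁ : Finset ℝ) (m₁ : ℝ → ℕ), ↑t₁ ⊆ s ∧
        (∀ x ∈ t₁, VanishesToOrder (deriv f) (m₁ x) x) ∧ (∀ y ∈ t₁, y < a) ∧
        t.sum m ≤ t₁.sum m₁ := by
      rcases t.eq_empty_or_nonempty with rfl | hne
      · exact ⟨∅, 0, by simp, by simp, by simp, by simp⟩
      obtain ⟨t', m', ht's, hm', ht't, hsum⟩ :=
        ih ((Finset.coe_subset.2 (Finset.subset_insert a t)).trans hts)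
          fun x hx => hm x (Finset.mem_insert_of_mem hx)
      have hb : t.max' hne ∈ insert a t := Finset.mem_insert_of_mem (t.max'_mem hne)
      -- Rolle between the two largest zeros of `f`.
      obtain ⟨c, ⟨hbc, hca⟩, hcs, hc1⟩ := exists_mem_Ioo_vanishesToOrder_deriv hf (hts hb) has
        (hlt _ (t.max'_mem hne)) ((hm _ hb).2.apply_eq_zero (hm _ hb).1) (hfa.apply_eq_zero ha1)
      have ht'c : ∀ y ∈ t', y < c := fun y hy => by
        obtain ⟨z, hz, hyz⟩ := ht't y hy
        exact hyz.trans_lt ((t.le_max' z hz).trans_lt hbc)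
      have hct' : c ∉ t' := fun h => lt_irrefl c (ht'c c h)
      refine ⟨insert c t', Function.update m' c 1, ?_, hc1.forall_mem_insert_update hct' hm', ?_,
        by rw [Finset.sum_insert_update hct']; omega⟩
      · simpa [Set.insert_subset_iff] using ⟨hcs, ht's⟩
      · simpa using ⟨hca, fun y hy => (ht'c y hy).trans hca⟩
    have hat₁ : a ∉ t₁ := fun h => lt_irrefl a (ht₁a a h)
    refine ⟨insert a t₁, Function.update m₁ a (m a - 1), ?_,
      hfa.deriv.forall_mem_insert_update hat₁ hm₁, ?_, ?_⟩
    · simpa [Set.insert_subset_iff] using ⟨has, ht₁s⟩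
    · exact fun y hy => ⟨a, Finset.mem_insert_self a t,
        (Finset.mem_insert.1 hy).elim le_of_eq fun h => (ht₁a y h).le⟩
    · rw [Finset.sum_insert fun h => lt_irrefl a (hlt a h), Finset.sum_insert_update hat₁]
      linarith [Nat.sub_add_cancel ha1]

theorem of_deriv [s.OrdConnected] (hf : ContinuousOn f s)
    (hf' : ZerosWithMultAtMost (deriv f) s l) : ZerosWithMultAtMost f s (l + 1) := by
  intro t m hts hm
  obtain ⟨t', m', ht's, hm', -, hsum⟩ := exists_vanishesToOrder_deriv hf t m hts hm
  have := hf'.sum_le t' m' ht's hm'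
  omega

end ZerosWithMultAtMost

theorem exists_hasDerivAt_of_continuousOn {s : Set ℝ} (hs : IsOpen s) [hs' : s.OrdConnected]
    {c : ℝ → ℝ} (hc : ContinuousOn c s) : ∃ F : ℝ → ℝ, ∀ t ∈ s, HasDerivAt F (c t) t := by
  rcases s.eq_empty_or_nonempty with rfl | ⟨t₀, ht₀⟩
  · exact ⟨0, by simp⟩
  refine ⟨fun t => ∫ τ in t₀..t, c τ, fun t ht => ?_⟩
  exact intervalIntegral.integral_hasDerivAt_right
    (hc.mono (hs'.uIcc_subset ht₀ ht)).intervalIntegrable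
    (hc.stronglyMeasurableAtFilter hs t ht) (hc.continuousAt (hs.mem_nhds ht))

theorem exists_integratingFactor {s : Set ℝ} (hs : IsOpen s) [s.OrdConnected] {c : ℝ → ℝ}
    (hc : ContDiffOn ℝ ∞ c s) :
    ∃ E : ℝ → ℝ, ContDiffOn ℝ ∞ E s ∧ (∀ t ∈ s, E t ≠ 0) ∧ ∀ t ∈ s, HasDerivAt E (E t * c t) t := by
  obtain ⟨F, hF⟩ := exists_hasDerivAt_of_continuousOn hs hc.continuousOn
  have hFs : ContDiffOn ℝ ∞ F s := (contDiffOn_infty_iff_deriv_of_isOpen hs).2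
    ⟨fun t ht => (hF t ht).differentiableAt.differentiableWithinAt,
      hc.congr fun t ht => (hF t ht).deriv⟩
  exact ⟨fun t => Real.exp (F t), Real.contDiff_exp.comp_contDiffOn hFs,
    fun t _ => Real.exp_ne_zero _, fun t ht => (hF t ht).exp⟩

noncomputable def wronskian (x y : ℝ → ℝ) : ℝ → ℝ := x * deriv y - deriv x * y

theorem hasDerivAt_wronskian {x y : ℝ → ℝ} {t : ℝ} (hx : DifferentiableAt ℝ x t)
    (hx' : DifferentiableAt ℝ (deriv x) t) (hy : DifferentiableAt ℝ y t)
    (hy' : DifferentiableAt ℝ (deriv y) t) :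
    HasDerivAt (wronskian x y) (x t * deriv (deriv y) t - deriv (deriv x) t * y t) t :=
  ((hx.hasDerivAt.mul hy'.hasDerivAt).sub (hx'.hasDerivAt.mul hy.hasDerivAt)).congr_deriv
    (by ring)

theorem wronskian_eq_deriv_div_mul_sq {x y : ℝ → ℝ} {t : ℝ} (hx : DifferentiableAt ℝ x t)
    (hy : DifferentiableAt ℝ y t) (hx0 : x t ≠ 0) :
    wronskian x y t = (deriv (y / x) * x ^ 2) t := by
  simp only [wronskian, Pi.mul_apply, Pi.sub_apply, Pi.pow_apply,
    (hy.hasDerivAt.div hx.hasDerivAt hx0).deriv]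
  field_simp

section SecondOrderODE

variable {s : Set ℝ} {a₁ a₂ R x₀ x : ℝ → ℝ} {l : ℕ}

theorem hasDerivAt_wronskian_of_ode {t : ℝ} (hx₀ : DifferentiableAt ℝ x₀ t)
    (hx₀' : DifferentiableAt ℝ (deriv x₀) t) (hx : DifferentiableAt ℝ x t)
    (hx' : DifferentiableAt ℝ (deriv x) t)
    (hode₀ : deriv (deriv x₀) t + a₁ t * deriv x₀ t + a₂ t * x₀ t = 0)
    (hode : deriv (deriv x) t + a₁ t * deriv x t + a₂ t * x t = R t) :
    HasDerivAt (wronskian x₀ x) (x₀ t * R t - a₁ t * wronskian x₀ x t) t :=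
  (hasDerivAt_wronskian hx₀ hx₀' hx hx').congr_deriv <| by
    simp only [wronskian, Pi.sub_apply, Pi.mul_apply]
    linear_combination x₀ t * hode - x t * hode₀

theorem ZerosWithMultAtMost.wronskian_of_ode (hs : IsOpen s) [s.OrdConnected]
    (ha₁ : ContDiffOn ℝ ∞ a₁ s) (hx₀s : ContDiffOn ℝ ∞ x₀ s) (hxs : ContDiffOn ℝ ∞ x s)
    (hx₀0 : ∀ t ∈ s, x₀ t ≠ 0)
    (hode₀ : ∀ t ∈ s, deriv (deriv x₀) t + a₁ t * deriv x₀ t + a₂ t * x₀ t = 0)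
    (hode : ∀ t ∈ s, deriv (deriv x) t + a₁ t * deriv x t + a₂ t * x t = R t)
    (hR : ZerosWithMultAtMost R s l) : ZerosWithMultAtMost (wronskian x₀ x) s (l + 1) := by
  have hderiv {f : ℝ → ℝ} (hf : ContDiffOn ℝ ∞ f s) : ContDiffOn ℝ ∞ (deriv f) s :=
    hf.deriv_of_isOpen hs le_rfl
  have hdiff {f : ℝ → ℝ} (hf : ContDiffOn ℝ ∞ f s) {t : ℝ} (ht : t ∈ s) :
      DifferentiableAt ℝ f t :=
    hf.differentiableAt_of_isOpen hs (by simp) ht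
  obtain ⟨E, hE, hE0, hE'⟩ := exists_integratingFactor hs ha₁
  have hW : ContDiffOn ℝ ∞ (wronskian x₀ x) s :=
    (hx₀s.mul (hderiv hxs)).sub ((hderiv hx₀s).mul hxs)
  have hEW : ContDiffOn ℝ ∞ (E * wronskian x₀ x) s := hE.mul hW
  -- `E` is the integrating factor of Abel's equation `W' = x₀ R - a₁ W`.
  have hEW' : ∀ t ∈ s, HasDerivAt (E * wronskian x₀ x) (E t * x₀ t * R t) t := fun t ht =>
    ((hE' t ht).mul (hasDerivAt_wronskian_of_ode (hdiff hx₀s ht) (hdiff (hderiv hx₀s) ht)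
      (hdiff hxs ht) (hdiff (hderiv hxs) ht) (hode₀ t ht) (hode t ht))).congr_deriv (by ring)
  have hzeros : ZerosWithMultAtMost (deriv (E * wronskian x₀ x)) s l :=
    hR.of_eqOn_mul hs (hderiv hEW)
      ((hE.mul hx₀s).inv fun t ht => mul_ne_zero (hE0 t ht) (hx₀0 t ht)) fun t ht => by
        have := hE0 t ht
        have := hx₀0 t ht
        simp only [Pi.mul_apply, Pi.inv_apply, (hEW' t ht).deriv]
        field_simp
  exact (hzeros.of_deriv hEW.continuousOn).of_eqOn_mul hs hW hE fun t _ => mul_comm _ _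

theorem ZerosWithMultAtMost.of_wronskian (hs : IsOpen s) [s.OrdConnected]
    (hx₀s : ContDiffOn ℝ ∞ x₀ s) (hxs : ContDiffOn ℝ ∞ x s) (hx₀0 : ∀ t ∈ s, x₀ t ≠ 0)
    (hW : ZerosWithMultAtMost (wronskian x₀ x) s l) : ZerosWithMultAtMost x s (l + 1) := by
  have hu : ContDiffOn ℝ ∞ (x / x₀) s := hxs.div hx₀s hx₀0
  have hu' : ZerosWithMultAtMost (deriv (x / x₀)) s l :=
    hW.of_eqOn_mul hs (hu.deriv_of_isOpen hs le_rfl) (hx₀s.pow 2) fun t ht =>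
      wronskian_eq_deriv_div_mul_sq (hx₀s.differentiableAt_of_isOpen hs (by simp) ht)
        (hxs.differentiableAt_of_isOpen hs (by simp) ht) (hx₀0 t ht)
  exact (hu'.of_deriv hu.continuousOn).of_eqOn_mul hs hxs (hx₀s.inv hx₀0) fun t _ => by
    simp [div_eq_mul_inv]

end SecondOrderODE

theorem nonhomogeneous_zero_bound_general (a b : ℝ) (a₁ a₂ R : ℝ → ℝ) (l : ℕ)
    (ha₁ : AnalyticOnNhd ℝ a₁ (Set.Ioo a b))
    (x₀ : ℝ → ℝ) (hx₀a : AnalyticOnNhd ℝ x₀ (Set.Ioo a b))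
    (hx₀ : ∀ t ∈ Set.Ioo a b,
      deriv (deriv x₀) t + a₁ t * deriv x₀ t + a₂ t * x₀ t = 0)
    (hx₀0 : ∀ t ∈ Set.Ioo a b, x₀ t ≠ 0)
    (hRz : ZerosWithMultAtMost R (Set.Ioo a b) l)
    (x : ℝ → ℝ) (hxa : AnalyticOnNhd ℝ x (Set.Ioo a b))
    (hx : ∀ t ∈ Set.Ioo a b,
      deriv (deriv x) t + a₁ t * deriv x t + a₂ t * x t = R t) :
    ZerosWithMultAtMost x (Set.Ioo a b) (l + 2) := by
  have hs : IsOpen (Ioo a b) := isOpen_Ioo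
  have hsmooth {f : ℝ → ℝ} (hf : AnalyticOnNhd ℝ f (Ioo a b)) : ContDiffOn ℝ ∞ f (Ioo a b) :=
    hf.contDiffOn hs.uniqueDiffOn
  exact (hRz.wronskian_of_ode hs (hsmooth ha₁) (hsmooth hx₀a) (hsmooth hxa) hx₀0 hx₀ hx).of_wronskian
    hs (hsmooth hx₀a) (hsmooth hxa) hx₀0

/-- Propositions 3.1–3.2 (Gavrilov–Iliev): if the homogeneous analytic linear ODE
`x'' + a₁ x' + a₂ x = 0` on the open interval `(a,b)` has a nowhere-vanishing solution
`x₀`, and `R` is analytic with at most `l` zeros counted with multiplicity, then every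
solution of `x'' + a₁ x' + a₂ x = R` has at most `l + 2` zeros counted with multiplicity. -/
theorem nonhomogeneous_zero_bound (a b : ℝ) (hab : a < b) (a₁ a₂ R : ℝ → ℝ) (l : ℕ)
    (ha₁ : AnalyticOnNhd ℝ a₁ (Set.Ioo a b))
    (ha₂ : AnalyticOnNhd ℝ a₂ (Set.Ioo a b))
    (hR : AnalyticOnNhd ℝ R (Set.Ioo a b))
    (x₀ : ℝ → ℝ) (hx₀a : AnalyticOnNhd ℝ x₀ (Set.Ioo a b))
    (hx₀ : ∀ t ∈ Set.Ioo a b,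
      deriv (deriv x₀) t + a₁ t * deriv x₀ t + a₂ t * x₀ t = 0)
    (hx₀0 : ∀ t ∈ Set.Ioo a b, x₀ t ≠ 0)
    (hRz : ZerosWithMultAtMost R (Set.Ioo a b) l)
    (x : ℝ → ℝ) (hxa : AnalyticOnNhd ℝ x (Set.Ioo a b))
    (hx : ∀ t ∈ Set.Ioo a b,
      deriv (deriv x) t + a₁ t * deriv x t + a₂ t * x t = R t) :
    ZerosWithMultAtMost x (Set.Ioo a b) (l + 2) :=
  nonhomogeneous_zero_bound_general a b a₁ a₂ R l ha₁ x₀ hx₀a hx₀ hx₀0 hRz x hxa hx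
end
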